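/- arXiv:1402.1155 — 3 statements merged into one kernel-verified Lean document; each statement's English description precedes it below -/
import Mathlib

section
/- Let (Ω, F, P) be a probability space and G a sub-σ-field of F. Then the space L_σ(G) of all random variables that are σ-integrable with respect to G (with a.s. equal random variables identified, ordered a.s. pointwise) is a super Dedekind complete Riesz space: every nonempty subset of L_σ(G) that is bounded from above has a supremum, and every subset having a supremum contains an at most countable subset having the same supremum. -/
open MeasureTheory Filter
open scoped ENNReal NNReal

/-- A random variable `ξ` is σ-integrable with respect to the sub-σ-field `G` if there is a
sequence of sets `s n ∈ G` increasing to `Ω` such that `ξ · 1_{s n}` is integrable for each `n`. -/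
def SigmaIntegrable {Ω : Type*} {mΩ : MeasurableSpace Ω} (μ : Measure Ω)
    (G : MeasurableSpace Ω) (ξ : Ω → ℝ) : Prop :=
  ∃ s : ℕ → Set Ω, (∀ n, MeasurableSet[G] (s n)) ∧ Monotone s ∧
    (⋃ n, s n) = Set.univ ∧ ∀ n, Integrable ((s n).indicator ξ) μ

/-- `η` is (a version of) the generalized conditional expectation `E[ξ ∣ G]`:  `η` is
`G`-measurable and `E[ξ · 1_A] = E[η · 1_A]` for every `A ∈ G` such that `ξ · 1_A` is
integrable. -/
def IsGCE {Ω : Type*} {mΩ : MeasurableSpace Ω} (μ : Measure Ω)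
    (G : MeasurableSpace Ω) (ξ η : Ω → ℝ) : Prop :=
  Measurable[G] η ∧ ∀ A : Set Ω, MeasurableSet[G] A → Integrable (A.indicator ξ) μ →
    ∫ ω, A.indicator ξ ω ∂μ = ∫ ω, A.indicator η ω ∂μ

/-!
The supremum of a family `S` bounded above is built as the pointwise supremum of a countable
subfamily `C ⊆ S` chosen to maximise `∫ arctan (sup C)`; such a maximiser exists because the
integrals are bounded and a countable union of countable families is countable. Adjoining any
`ξ ∈ S` to `C` cannot raise the integral, and as `arctan` is strictly increasing this forces
`ξ ≤ sup C` a.e. The supremum is σ-integrable because it lies between an element of `S` and an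
upper bound, both σ-integrable along one common exhausting sequence.
-/

open Set

section

variable {Ω : Type*}

section SigmaIntegrable

variable {G mΩ : MeasurableSpace Ω} {μ : Measure Ω} {ξ η : Ω → ℝ}

theorem SigmaIntegrable.of_integrable_indicator₂ (hG : G ≤ mΩ) (hξ : SigmaIntegrable μ G ξ)
    (hη : SigmaIntegrable μ G η) {ζ : Ω → ℝ}
    (h : ∀ A, MeasurableSet A → Integrable (A.indicator ξ) μ → Integrable (A.indicator η) μ →
      Integrable (A.indicator ζ) μ) :
    SigmaIntegrable μ G ζ := by
  obtain ⟨u, hu, hu_mono, hu_univ, hξu⟩ := hξ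
  obtain ⟨v, hv, hv_mono, hv_univ, hηv⟩ := hη
  refine ⟨fun n => u n ∩ v n, fun n => (hu n).inter (hv n),
    fun m n hmn => inter_subset_inter (hu_mono hmn) (hv_mono hmn), ?_,
    fun n => h (u n ∩ v n) (hG _ ((hu n).inter (hv n))) ?_ ?_⟩
  · rw [iUnion_inter_of_monotone hu_mono hv_mono, hu_univ, hv_univ, univ_inter]
  · rw [inter_comm, ← indicator_indicator]
    exact (hξu n).indicator (hG _ (hv n))
  · rw [← indicator_indicator]
    exact (hηv n).indicator (hG _ (hu n))

theorem SigmaIntegrable.add (hG : G ≤ mΩ) (hξ : SigmaIntegrable μ G ξ)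
    (hη : SigmaIntegrable μ G η) : SigmaIntegrable μ G (ξ + η) :=
  hξ.of_integrable_indicator₂ hG hη fun A _ hξA hηA => by
    rw [indicator_add']
    exact hξA.add hηA

theorem SigmaIntegrable.sup (hG : G ≤ mΩ) (hξ : SigmaIntegrable μ G ξ)
    (hη : SigmaIntegrable μ G η) : SigmaIntegrable μ G (ξ ⊔ η) :=
  hξ.of_integrable_indicator₂ hG hη fun A _ hξA hηA => by
    have : A.indicator (ξ ⊔ η) = A.indicator ξ ⊔ A.indicator η := by
      ext ω
      by_cases hω : ω ∈ A <;> simp [hω]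
    rw [this]
    exact hξA.sup hηA

theorem SigmaIntegrable.const_smul (c : ℝ) (hξ : SigmaIntegrable μ G ξ) :
    SigmaIntegrable μ G (c • ξ) := by
  obtain ⟨s, hs, hs_mono, hs_univ, hξs⟩ := hξ
  exact ⟨s, hs, hs_mono, hs_univ, fun n => by
    rw [show c • ξ = (c • ξ ·) from rfl, indicator_const_smul]
    exact (hξs n).smul c⟩

theorem SigmaIntegrable.of_ae_le_of_ae_le (hG : G ≤ mΩ) {f : Ω → ℝ}
    (hf : AEStronglyMeasurable f μ) (hξ : SigmaIntegrable μ G ξ) (hη : SigmaIntegrable μ G η)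
    (hξf : ξ ≤ᵐ[μ] f) (hfη : f ≤ᵐ[μ] η) : SigmaIntegrable μ G f :=
  hξ.of_integrable_indicator₂ hG hη fun _ hA hξA hηA =>
    integrable_of_le_of_le (hf.indicator hA)
      (hξf.mono fun _ h => indicator_le_indicator h) (hfη.mono fun _ h => indicator_le_indicator h)
      hξA hηA

end SigmaIntegrable

def IsEssSup {mΩ : MeasurableSpace Ω} (μ : Measure Ω) (S : Set (Ω → ℝ)) (s : Ω → ℝ) : Prop :=
  (∀ ξ ∈ S, ξ ≤ᵐ[μ] s) ∧ ∀ b : Ω → ℝ, (∀ ξ ∈ S, ξ ≤ᵐ[μ] b) → s ≤ᵐ[μ] b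

namespace IsEssSup

variable {G mΩ : MeasurableSpace Ω} {μ : Measure Ω} {C D : Set (Ω → ℝ)} {s t : Ω → ℝ}

theorem ae_le_of_subset (hs : IsEssSup μ C s) (ht : IsEssSup μ D t) (hCD : C ⊆ D) :
    s ≤ᵐ[μ] t :=
  hs.2 t fun ξ hξ => ht.1 ξ (hCD hξ)

theorem of_subset (hs : IsEssSup μ C s) (hCD : C ⊆ D) (hD : ∀ ξ ∈ D, ξ ≤ᵐ[μ] s) :
    IsEssSup μ D s :=
  ⟨hD, fun b hb => hs.2 b fun ξ hξ => hb ξ (hCD hξ)⟩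

theorem sigmaIntegrable (hG : G ≤ mΩ) {ξ b : Ω → ℝ}
    (hs : IsEssSup μ D s) (hs_meas : AEStronglyMeasurable s μ) (hξD : ξ ∈ D)
    (hξ : SigmaIntegrable μ G ξ) (hb : SigmaIntegrable μ G b) (hbD : ∀ η ∈ D, η ≤ᵐ[μ] b) :
    SigmaIntegrable μ G s :=
  hξ.of_ae_le_of_ae_le hG hs_meas hb (hs.1 ξ hξD) (hs.2 b hbD)

end IsEssSup

section CountableFamily

variable {mΩ : MeasurableSpace Ω} {μ : Measure Ω} {C : Set (Ω → ℝ)}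

theorem measurable_sSup_of_countable (hC : C.Countable) (hm : ∀ ξ ∈ C, Measurable ξ) :
    Measurable (sSup C) := by
  have : Countable C := hC.to_subtype
  rw [show sSup C = fun ω => ⨆ ξ : C, (ξ : Ω → ℝ) ω from funext fun ω => sSup_apply]
  exact Measurable.iSup fun ξ : C => hm ξ ξ.2

theorem isEssSup_sSup_of_countable (hC : C.Countable) (hC_ne : C.Nonempty) {b : Ω → ℝ}
    (hb : ∀ ξ ∈ C, ξ ≤ᵐ[μ] b) : IsEssSup μ C (sSup C) := by
  have : Countable C := hC.to_subtype
  have : Nonempty C := hC_ne.to_subtype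
  refine ⟨fun ξ hξ => ?_, fun b' hb' => ?_⟩
  · filter_upwards [ae_all_iff.2 fun η : C => hb η η.2] with ω hω
    rw [sSup_apply]
    exact le_ciSup (f := fun η : C => (η : Ω → ℝ) ω) ⟨b ω, forall_mem_range.2 hω⟩ ⟨ξ, hξ⟩
  · filter_upwards [ae_all_iff.2 fun η : C => hb' η η.2] with ω hω
    rw [sSup_apply]
    exact ciSup_le hω

end CountableFamily

section Arctan

open Real

variable {mΩ : MeasurableSpace Ω} {μ : Measure Ω} [IsFiniteMeasure μ] {f g : Ω → ℝ}

theorem norm_arctan_le (x : ℝ) : ‖arctan x‖ ≤ π / 2 :=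
  (abs_lt.2 (arctan_mem_Ioo x)).le

theorem integrable_arctan_comp (hf : AEStronglyMeasurable f μ) :
    Integrable (fun ω => arctan (f ω)) μ :=
  .of_bound (continuous_arctan.comp_aestronglyMeasurable hf) (π / 2)
    (.of_forall fun ω => norm_arctan_le (f ω))

theorem integral_arctan_comp_mono (hf : AEStronglyMeasurable f μ) (hg : AEStronglyMeasurable g μ)
    (hfg : f ≤ᵐ[μ] g) : ∫ ω, arctan (f ω) ∂μ ≤ ∫ ω, arctan (g ω) ∂μ :=
  integral_mono_ae (integrable_arctan_comp hf) (integrable_arctan_comp hg)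
    (hfg.mono fun _ h => arctan_strictMono.monotone h)

theorem ae_eq_of_ae_le_of_integral_arctan_comp_le (hf : AEStronglyMeasurable f μ)
    (hg : AEStronglyMeasurable g μ) (hfg : f ≤ᵐ[μ] g)
    (h : ∫ ω, arctan (g ω) ∂μ ≤ ∫ ω, arctan (f ω) ∂μ) : f =ᵐ[μ] g := by
  have h_eq := (integral_eq_iff_of_ae_le (integrable_arctan_comp hf) (integrable_arctan_comp hg)
    (hfg.mono fun _ h => arctan_strictMono.monotone h)).1
    (le_antisymm (integral_arctan_comp_mono hf hg hfg) h)
  exact h_eq.mono fun _ h => arctan_injective h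

end Arctan

theorem exists_isMaxOn_countable_subsets {α β : Type*} [ConditionallyCompleteLinearOrder β]
    [TopologicalSpace β] [OrderTopology β] [FirstCountableTopology β] {S : Set α}
    {F : Set α → β} (hF : MonotoneOn F {C | C ⊆ S ∧ C.Countable})
    (hF_bdd : BddAbove (F '' {C | C ⊆ S ∧ C.Countable})) :
    ∃ C ∈ {C | C ⊆ S ∧ C.Countable}, IsMaxOn F {C | C ⊆ S ∧ C.Countable} C := by
  set 𝒞 := {C | C ⊆ S ∧ C.Countable}
  have h_ne : (F '' 𝒞).Nonempty := ⟨F ∅, ∅, ⟨empty_subset S, countable_empty⟩, rfl⟩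
  obtain ⟨u, -, hu, hu_mem⟩ := exists_seq_tendsto_sSup h_ne hF_bdd
  choose C hC hFC using hu_mem
  have hC_union : (⋃ n, C n) ∈ 𝒞 :=
    ⟨iUnion_subset fun n => (hC n).1, countable_iUnion fun n => (hC n).2⟩
  refine ⟨⋃ n, C n, hC_union, fun D hD => ?_⟩
  calc F D ≤ sSup (F '' 𝒞) := le_csSup hF_bdd ⟨D, hD, rfl⟩
    _ ≤ F (⋃ n, C n) := le_of_tendsto' hu fun n =>
        hFC n ▸ hF (hC n) hC_union (subset_iUnion C n)

open Real in
theorem exists_countable_isEssSup {mΩ : MeasurableSpace Ω} {μ : Measure Ω} [IsFiniteMeasure μ]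
    {S : Set (Ω → ℝ)} (hS : S.Nonempty) (hm : ∀ ξ ∈ S, Measurable ξ) {b : Ω → ℝ}
    (hb : ∀ ξ ∈ S, ξ ≤ᵐ[μ] b) :
    ∃ C ⊆ S, C.Countable ∧ ∃ s, Measurable s ∧ IsEssSup μ C s ∧ IsEssSup μ S s := by
  obtain ⟨ξ₀, hξ₀⟩ := hS
  set 𝒞 := {C | C ⊆ S ∧ C.Countable}
  -- `ξ₀` is adjoined so that every family is nonempty and `sSup` is not the junk value `0`
  have h_sub : ∀ D ∈ 𝒞, insert ξ₀ D ⊆ S := fun D hD => insert_subset hξ₀ hD.1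
  have h_sup : ∀ D ∈ 𝒞, IsEssSup μ (insert ξ₀ D) (sSup (insert ξ₀ D)) := fun D hD =>
    isEssSup_sSup_of_countable (hD.2.insert ξ₀) (insert_nonempty _ _)
      fun ξ hξ => hb ξ (h_sub D hD hξ)
  have h_meas : ∀ D ∈ 𝒞, Measurable (sSup (insert ξ₀ D)) := fun D hD =>
    measurable_sSup_of_countable (hD.2.insert ξ₀) fun ξ hξ => hm ξ (h_sub D hD hξ)
  set F : Set (Ω → ℝ) → ℝ := fun D => ∫ ω, arctan (sSup (insert ξ₀ D) ω) ∂μ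
  have hF_mono : MonotoneOn F 𝒞 := fun D hD E hE hDE =>
    integral_arctan_comp_mono (h_meas D hD).aestronglyMeasurable
      (h_meas E hE).aestronglyMeasurable
      ((h_sup D hD).ae_le_of_subset (h_sup E hE) (insert_subset_insert hDE))
  have hF_bdd : BddAbove (F '' 𝒞) := by
    refine ⟨π / 2 * μ.real univ, ?_⟩
    rintro _ ⟨D, -, rfl⟩
    exact (le_abs_self _).trans
      (norm_integral_le_of_norm_le_const (.of_forall fun ω => norm_arctan_le _))
  obtain ⟨C, hC, hC_max⟩ := exists_isMaxOn_countable_subsets hF_mono hF_bdd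
  refine ⟨insert ξ₀ C, h_sub C hC, hC.2.insert ξ₀, sSup (insert ξ₀ C), h_meas C hC, h_sup C hC,
    (h_sup C hC).of_subset (h_sub C hC) fun ξ hξ => ?_⟩
  have hD : insert ξ C ∈ 𝒞 := ⟨insert_subset hξ hC.1, hC.2.insert ξ⟩
  have h_eq : sSup (insert ξ₀ C) =ᵐ[μ] sSup (insert ξ₀ (insert ξ C)) :=
    ae_eq_of_ae_le_of_integral_arctan_comp_le (h_meas C hC).aestronglyMeasurable
      (h_meas _ hD).aestronglyMeasurable
      ((h_sup C hC).ae_le_of_subset (h_sup _ hD) (insert_subset_insert (subset_insert ξ C)))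
      (hC_max hD)
  exact ((h_sup _ hD).1 ξ (mem_insert_of_mem _ (mem_insert ξ C))).trans h_eq.symm.le

end

/-- `L_σ(G)`, ordered a.s. pointwise (with a.s. equal random variables identified), is a super
Dedekind complete Riesz space. -/
theorem Lsigma_superDedekindComplete
    {Ω : Type*} [mΩ : MeasurableSpace Ω] (μ : Measure Ω) [IsProbabilityMeasure μ]
    (G : MeasurableSpace Ω) (hG : G ≤ mΩ) :
    -- `L_σ(G)` is a Riesz space: closed under addition, scalar multiplication and suprema
    (∀ ξ η : Ω → ℝ, Measurable[mΩ] ξ → SigmaIntegrable μ G ξ → Measurable[mΩ] η →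
      SigmaIntegrable μ G η →
      SigmaIntegrable μ G (ξ + η) ∧ SigmaIntegrable μ G fun ω => max (ξ ω) (η ω)) ∧
    (∀ (c : ℝ) (ξ : Ω → ℝ), Measurable[mΩ] ξ → SigmaIntegrable μ G ξ →
      SigmaIntegrable μ G (c • ξ)) ∧
    -- Dedekind completeness: every nonempty subset bounded from above has a supremum
    (∀ S : Set (Ω → ℝ), S.Nonempty →
      (∀ ξ ∈ S, Measurable[mΩ] ξ ∧ SigmaIntegrable μ G ξ) →
      (∃ b : Ω → ℝ, (Measurable[mΩ] b ∧ SigmaIntegrable μ G b) ∧ ∀ ξ ∈ S, ξ ≤ᵐ[μ] b) →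
      ∃ s : Ω → ℝ, (Measurable[mΩ] s ∧ SigmaIntegrable μ G s) ∧
        (∀ ξ ∈ S, ξ ≤ᵐ[μ] s) ∧
        ∀ b : Ω → ℝ, Measurable[mΩ] b → SigmaIntegrable μ G b → (∀ ξ ∈ S, ξ ≤ᵐ[μ] b) →
          s ≤ᵐ[μ] b) ∧
    -- countable sup property: any subset with a supremum contains a countable subset
    -- with the same supremum
    (∀ S : Set (Ω → ℝ), (∀ ξ ∈ S, Measurable[mΩ] ξ ∧ SigmaIntegrable μ G ξ) →
      ∀ s : Ω → ℝ, Measurable[mΩ] s → SigmaIntegrable μ G s →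
      (∀ ξ ∈ S, ξ ≤ᵐ[μ] s) →
      (∀ b : Ω → ℝ, Measurable[mΩ] b → SigmaIntegrable μ G b → (∀ ξ ∈ S, ξ ≤ᵐ[μ] b) → s ≤ᵐ[μ] b) →
      ∃ C : Set (Ω → ℝ), C ⊆ S ∧ C.Countable ∧
        (∀ ξ ∈ C, ξ ≤ᵐ[μ] s) ∧
        ∀ b : Ω → ℝ, Measurable[mΩ] b → SigmaIntegrable μ G b → (∀ ξ ∈ C, ξ ≤ᵐ[μ] b) →
          s ≤ᵐ[μ] b) := by
  refine ⟨fun ξ η _ hξ _ hη => ⟨hξ.add hG hη, hξ.sup hG hη⟩,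
    fun c ξ _ hξ => hξ.const_smul c, ?_, ?_⟩
  · rintro S hS_ne hS ⟨b, ⟨-, hb⟩, hbS⟩
    obtain ⟨-, -, -, s, hs_meas, -, hs⟩ :=
      exists_countable_isEssSup hS_ne (fun ξ hξ => (hS ξ hξ).1) hbS
    obtain ⟨ξ₀, hξ₀⟩ := hS_ne
    exact ⟨s, ⟨hs_meas,
      hs.sigmaIntegrable hG hs_meas.aestronglyMeasurable hξ₀ (hS ξ₀ hξ₀).2 hb hbS⟩,
      hs.1, fun b' _ _ hb' => hs.2 b' hb'⟩
  · intro S hS s _ hs hsS hs_least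
    rcases S.eq_empty_or_nonempty with rfl | hS_ne
    · exact ⟨∅, empty_subset _, countable_empty, by simp,
        fun b hb_meas hb _ => hs_least b hb_meas hb (by simp)⟩
    obtain ⟨C, hCS, hC, s', hs'_meas, hs'C, hs'S⟩ :=
      exists_countable_isEssSup hS_ne (fun ξ hξ => (hS ξ hξ).1) hsS
    obtain ⟨ξ₀, hξ₀⟩ := hS_ne
    have hss' : s ≤ᵐ[μ] s' := hs_least s' hs'_meas
      (hs'S.sigmaIntegrable hG hs'_meas.aestronglyMeasurable hξ₀ (hS ξ₀ hξ₀).2 hs hsS) hs'S.1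
    exact ⟨C, hCS, hC, fun ξ hξ => hsS ξ (hCS hξ), fun b _ _ hb => hss'.trans (hs'C.2 b hb)⟩
end

section
/- Let (Ω, F, P) be a probability space and G a sub-σ-field of F. The generalized conditional expectation operator E[·|G] on L_σ(G) is order-continuous: if (ξ_n) is a sequence in L_σ(G) with ξ_n ↓ 0 a.s., then E[ξ_n|G] ↓ 0 a.s. -/
open MeasureTheory Filter
open scoped ENNReal NNReal

/-!
Everything is localised to `G`-sets on which the relevant functions are bounded or integrable;
countably many of them exhaust `Ω`. On such sets the generalized conditional expectation
preserves integrals, so it is monotone: `η n` decreases a.s. to some `η∞ ≥ 0`. On a `G`-set `A`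
inside a set where `ξ 0` is integrable and `η 0` is bounded, `∫_A η∞ ≤ ∫_A η n = ∫_A ξ n`, which
tends to `0` by monotone convergence; hence `η∞ = 0` a.s.
-/

open Set

section

variable {Ω : Type*} {G mΩ : MeasurableSpace Ω} {μ : Measure Ω}

theorem measure_eq_zero_of_setIntegral_nonpos {f : Ω → ℝ} {A : Set Ω} (hA : MeasurableSet A)
    (hf : IntegrableOn f A μ) (hpos : ∀ ω ∈ A, 0 < f ω) (hint : ∫ ω in A, f ω ∂μ ≤ 0) :
    μ A = 0 := by
  by_contra hμA
  have hsupp : Function.support f ∩ A = A := inter_eq_right.2 fun ω hω => (hpos ω hω).ne'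
  have := (setIntegral_pos_iff_support_of_nonneg_ae
    (ae_restrict_of_forall_mem hA fun ω hω => (hpos ω hω).le) hf).2
    (by rw [hsupp]; exact pos_iff_ne_zero.2 hμA)
  linarith

theorem ae_le_of_forall_setIntegral_le_of_cover [IsFiniteMeasure μ] {ι : Type*} [Countable ι]
    (hG : G ≤ mΩ) {f g : Ω → ℝ} (hf : Measurable[G] f) (hg : Measurable[G] g)
    {s : ι → Set Ω} (hs : ∀ i, MeasurableSet[G] (s i)) (hcov : ⋃ i, s i = univ)
    (h : ∀ i A, MeasurableSet[G] A → A ⊆ s i → IntegrableOn f A μ → IntegrableOn g A μ →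
      ∫ ω in A, f ω ∂μ ≤ ∫ ω in A, g ω ∂μ) :
    f ≤ᵐ[μ] g := by
  set A : ι → ℕ → Set Ω := fun i M =>
    s i ∩ {ω | |f ω| ≤ M} ∩ {ω | |g ω| ≤ M} ∩ {ω | g ω < f ω}
  have hAG : ∀ i M, MeasurableSet[G] (A i M) := fun i M =>
    (((hs i).inter (measurableSet_le (mδ := G) (measurable_abs.comp hf) measurable_const)).inter
      (measurableSet_le (mδ := G) (measurable_abs.comp hg) measurable_const)).inter (measurableSet_lt (mδ := G) hg hf)
  have hnull : ∀ i M, μ (A i M) = 0 := by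
    intro i M
    have hA := hG _ (hAG i M)
    have bdd : ∀ {φ : Ω → ℝ}, Measurable[G] φ → (∀ ω ∈ A i M, |φ ω| ≤ M) →
        IntegrableOn φ (A i M) μ := fun hφ hφM =>
      Measure.integrableOn_of_bounded (measure_ne_top _ _)
        (hφ.mono hG le_rfl).aestronglyMeasurable (ae_restrict_of_forall_mem hA hφM)
    have hfA := bdd hf fun ω hω => hω.1.1.2
    have hgA := bdd hg fun ω hω => hω.1.2
    refine measure_eq_zero_of_setIntegral_nonpos (f := fun ω => f ω - g ω) hA (hfA.sub hgA)
      (fun ω hω => sub_pos.2 hω.2) ?_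
    rw [integral_sub hfA hgA]
    linarith [h i _ (hAG i M) (fun ω hω => hω.1.1.1) hfA hgA]
  have hcover : {ω | g ω < f ω} ⊆ ⋃ i, ⋃ M : ℕ, A i M := by
    intro ω hω
    obtain ⟨i, hi⟩ := mem_iUnion.1 (hcov.symm ▸ mem_univ ω)
    obtain ⟨M, hM⟩ := exists_nat_ge (max |f ω| |g ω|)
    exact mem_iUnion₂.2
      ⟨i, M, ⟨⟨⟨hi, (le_max_left _ _).trans hM⟩, (le_max_right _ _).trans hM⟩, hω⟩⟩
  simp only [EventuallyLE, ae_iff, not_le]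
  exact measure_mono_null hcover (measure_iUnion_null fun i => measure_iUnion_null (hnull i))

theorem SigmaIntegrable.exists_integrableOn (hG : G ≤ mΩ) {ξ : Ω → ℝ}
    (h : SigmaIntegrable μ G ξ) :
    ∃ s : ℕ → Set Ω, (∀ n, MeasurableSet[G] (s n)) ∧ ⋃ n, s n = univ ∧
      ∀ n, IntegrableOn ξ (s n) μ := by
  obtain ⟨s, hsG, -, hcov, hint⟩ := h
  exact ⟨s, hsG, hcov, fun n => (integrable_indicator_iff (hG _ (hsG n))).1 (hint n)⟩

theorem SigmaIntegrable.aestronglyMeasurable (hG : G ≤ mΩ) {ξ : Ω → ℝ}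
    (h : SigmaIntegrable μ G ξ) : AEStronglyMeasurable ξ μ := by
  obtain ⟨s, -, hcov, hint⟩ := h.exists_integrableOn hG
  rw [← Measure.restrict_univ (μ := μ), ← hcov, aestronglyMeasurable_iUnion_iff]
  exact fun n => (hint n).aestronglyMeasurable

theorem sigmaIntegrable_zero : SigmaIntegrable μ G 0 :=
  ⟨fun _ => univ, fun _ => MeasurableSet.univ, monotone_const, iUnion_const _,
    fun _ => by simp⟩

theorem isGCE_zero : IsGCE μ G 0 0 :=
  ⟨measurable_const, fun _ _ _ => rfl⟩

theorem IsGCE.setIntegral_eq (hG : G ≤ mΩ) {ξ η : Ω → ℝ} (h : IsGCE μ G ξ η) {A : Set Ω}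
    (hA : MeasurableSet[G] A) (hξ : IntegrableOn ξ A μ) :
    ∫ ω in A, ξ ω ∂μ = ∫ ω in A, η ω ∂μ := by
  have hA' := hG _ hA
  simpa only [integral_indicator hA'] using h.2 A hA ((integrable_indicator_iff hA').2 hξ)

theorem IsGCE.ae_le [IsFiniteMeasure μ] (hG : G ≤ mΩ) {ξ ξ' η η' : Ω → ℝ}
    (h : IsGCE μ G ξ η) (hξ : SigmaIntegrable μ G ξ) (hξ' : SigmaIntegrable μ G ξ')
    (h' : IsGCE μ G ξ' η') (hle : ξ ≤ᵐ[μ] ξ') : η ≤ᵐ[μ] η' := by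
  obtain ⟨s, hsG, hs, hξs⟩ := hξ.exists_integrableOn hG
  obtain ⟨s', hsG', hs', hξs'⟩ := hξ'.exists_integrableOn hG
  refine ae_le_of_forall_setIntegral_le_of_cover hG h.1 h'.1
    (s := fun p : ℕ × ℕ => s p.1 ∩ s' p.2) (fun p => (hsG p.1).inter (hsG' p.2)) ?_
    fun p A hA hAs _ _ => ?_
  · refine eq_univ_of_forall fun ω => ?_
    obtain ⟨m, hm⟩ := mem_iUnion.1 (hs.symm ▸ mem_univ ω)
    obtain ⟨m', hm'⟩ := mem_iUnion.1 (hs'.symm ▸ mem_univ ω)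
    exact mem_iUnion.2 ⟨(m, m'), hm, hm'⟩
  have hξA : IntegrableOn ξ A μ := (hξs p.1).mono_set (hAs.trans inter_subset_left)
  have hξA' : IntegrableOn ξ' A μ := (hξs' p.2).mono_set (hAs.trans inter_subset_right)
  calc ∫ ω in A, η ω ∂μ = ∫ ω in A, ξ ω ∂μ := (h.setIntegral_eq hG hA hξA).symm
    _ ≤ ∫ ω in A, ξ' ω ∂μ := setIntegral_mono_ae hξA hξA' hle
    _ = ∫ ω in A, η' ω ∂μ := h'.setIntegral_eq hG hA hξA'

theorem IsGCE.ae_nonneg [IsFiniteMeasure μ] (hG : G ≤ mΩ) {ξ η : Ω → ℝ} (h : IsGCE μ G ξ η)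
    (hξ : SigmaIntegrable μ G ξ) (hξ0 : 0 ≤ᵐ[μ] ξ) : 0 ≤ᵐ[μ] η :=
  isGCE_zero.ae_le hG sigmaIntegrable_zero hξ h hξ0

theorem ae_iInf_le_zero_of_isGCE [IsFiniteMeasure μ] (hG : G ≤ mΩ) {ξ η : ℕ → Ω → ℝ}
    (hξσ : ∀ n, SigmaIntegrable μ G (ξ n)) (hgce : ∀ n, IsGCE μ G (ξ n) (η n))
    (hξ : ∀ᵐ ω ∂μ, Antitone (ξ · ω) ∧ Tendsto (ξ · ω) atTop (nhds 0))
    (hη : ∀ᵐ ω ∂μ, Antitone (η · ω) ∧ ∀ n, 0 ≤ η n ω) :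
    (fun ω => ⨅ n, η n ω) ≤ᵐ[μ] 0 := by
  obtain ⟨s, hsG, hs, hξs⟩ := (hξσ 0).exists_integrableOn hG
  refine ae_le_of_forall_setIntegral_le_of_cover hG (Measurable.iInf fun n => (hgce n).1)
    measurable_const (s := fun p : ℕ × ℕ => s p.1 ∩ {ω | η 0 ω ≤ p.2})
    (fun p => (hsG p.1).inter (measurableSet_le (mδ := G) (hgce 0).1 measurable_const)) ?_
    fun p A hAG hAs hinfA _ => ?_
  · refine eq_univ_of_forall fun ω => ?_
    obtain ⟨m, hm⟩ := mem_iUnion.1 (hs.symm ▸ mem_univ ω)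
    obtain ⟨M, hM⟩ := exists_nat_ge (η 0 ω)
    exact mem_iUnion.2 ⟨(m, M), hm, hM⟩
  have hA := hG _ hAG
  have hξA : ∀ n, IntegrableOn (ξ n) A μ := fun n =>
    ((hξs p.1).mono_set (hAs.trans inter_subset_left)).mono'
      ((hξσ n).aestronglyMeasurable hG).restrict <| ae_restrict_of_ae <| hξ.mono fun ω h => by
        rw [Real.norm_eq_abs, abs_of_nonneg (h.1.le_of_tendsto h.2 n)]
        exact h.1 (Nat.zero_le n)
  have hηA : ∀ n, IntegrableOn (η n) A μ := fun n =>
    Measure.integrableOn_of_bounded (M := p.2) (measure_ne_top _ _)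
      ((hgce n).1.mono hG le_rfl).aestronglyMeasurable <| by
        filter_upwards [ae_restrict_mem hA, ae_restrict_of_ae hη] with ω hωA hω
        rw [Real.norm_eq_abs, abs_of_nonneg (hω.2 n)]
        exact (hω.1 (Nat.zero_le n)).trans (hAs hωA).2
  have htend : Tendsto (fun n => ∫ ω in A, ξ n ω ∂μ) atTop (nhds 0) := by
    simpa using integral_tendsto_of_tendsto_of_antitone hξA integrableOn_zero
      (ae_restrict_of_ae (hξ.mono fun ω h => h.1)) (ae_restrict_of_ae (hξ.mono fun ω h => h.2))
  have hle : ∀ n, ∫ ω in A, ⨅ k, η k ω ∂μ ≤ ∫ ω in A, ξ n ω ∂μ := fun n => by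
    rw [(hgce n).setIntegral_eq hG hAG (hξA n)]
    exact setIntegral_mono_ae_restrict hinfA (hηA n) <| ae_restrict_of_ae <|
      hη.mono fun ω h => ciInf_le ⟨0, forall_mem_range.2 h.2⟩ n
  simpa using ge_of_tendsto' htend hle

end

theorem generalized_condExp_order_continuous_general
    {Ω : Type*} [mΩ : MeasurableSpace Ω] (μ : Measure Ω) [IsProbabilityMeasure μ]
    (G : MeasurableSpace Ω) (hG : G ≤ mΩ)
    (ξ η : ℕ → Ω → ℝ)
    (hξσ : ∀ n, SigmaIntegrable μ G (ξ n))
    (hgce : ∀ n, IsGCE μ G (ξ n) (η n))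
    (hdec : ∀ᵐ ω ∂μ, Antitone (fun n => ξ n ω) ∧
      Filter.Tendsto (fun n => ξ n ω) Filter.atTop (nhds 0)) :
    ∀ᵐ ω ∂μ, Antitone (fun n => η n ω) ∧
      Filter.Tendsto (fun n => η n ω) Filter.atTop (nhds 0) := by
  have hηanti : ∀ᵐ ω ∂μ, Antitone (η · ω) := by
    have hstep := ae_all_iff.2 fun n => (hgce (n + 1)).ae_le hG (hξσ (n + 1)) (hξσ n) (hgce n)
      (hdec.mono fun ω h => h.1 n.le_succ)
    exact hstep.mono fun ω h => antitone_nat_of_succ_le h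
  have hηnn : ∀ᵐ ω ∂μ, ∀ n, 0 ≤ η n ω := ae_all_iff.2 fun n =>
    (hgce n).ae_nonneg hG (hξσ n) (hdec.mono fun ω h => h.1.le_of_tendsto h.2 n)
  have hinf := ae_iInf_le_zero_of_isGCE hG hξσ hgce hdec (hηanti.and hηnn)
  filter_upwards [hηanti, hηnn, hinf] with ω hanti hnn hinf
  refine ⟨hanti, ?_⟩
  have hzero : ⨅ n, η n ω = 0 := le_antisymm hinf (le_ciInf hnn)
  simpa [hzero] using tendsto_atTop_ciInf hanti ⟨0, forall_mem_range.2 hnn⟩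

/-- The generalized conditional expectation operator is order-continuous: if `ξ n ↓ 0` a.s.
in `L_σ(G)`, then `E[ξ n ∣ G] ↓ 0` a.s. -/
theorem generalized_condExp_order_continuous
    {Ω : Type*} [mΩ : MeasurableSpace Ω] (μ : Measure Ω) [IsProbabilityMeasure μ]
    (G : MeasurableSpace Ω) (hG : G ≤ mΩ)
    (ξ η : ℕ → Ω → ℝ)
    (hξm : ∀ n, Measurable[mΩ] (ξ n)) (hξσ : ∀ n, SigmaIntegrable μ G (ξ n))
    (hgce : ∀ n, IsGCE μ G (ξ n) (η n))
    (hdec : ∀ᵐ ω ∂μ, Antitone (fun n => ξ n ω) ∧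
      Filter.Tendsto (fun n => ξ n ω) Filter.atTop (nhds 0)) :
    ∀ᵐ ω ∂μ, Antitone (fun n => η n ω) ∧
      Filter.Tendsto (fun n => η n ω) Filter.atTop (nhds 0) :=
  generalized_condExp_order_continuous_general (mΩ := mΩ) μ G hG ξ η hξσ hgce hdec
end

section
/- (Douglas' theorem) Let (Ω, F, P) be a probability space and T : L_1(Ω, F, P) → L_1(Ω, F, P) a linear operator. Then the following are equivalent: (i) T is a contractive Markov projection, i.e., T∘T = T, T is positive, T(1) = 1, and ‖T(ξ)‖_1 ≤ ‖ξ‖_1 for all ξ ∈ L_1; (ii) there exists a sub-σ-field G of F such that T is the ordinary conditional expectation operator E[·|G]. -/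
/-!
Let `G` be the family of sets `A` with `T 1_A = 1_A`. A positive contraction fixing `1` preserves
integrals: `∫ T 1_s ≤ μ s` and `∫ T 1_sᶜ ≤ μ sᶜ`, while the two add up to `∫ T 1 = μ Ω`; by
linearity, continuity and density of indicators, `∫ T f = ∫ f` for every `f`. Consequently the
fixed points of `T` form a closed sublattice of `L¹`: `T (u ⊓ v) ≤ u ⊓ v` and both sides have the
same integral. This makes `G` a σ-algebra, and it puts every level set `{u > c}` of a fixed point
`u` in `G`, since `1_{u > c}` is the `L¹`-limit of `(n (u - c))⁺ ⊓ 1`. When `T` is a projection,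
every `T f` is fixed, hence `G`-measurable. Finally, for `A ∈ G` positivity squeezes
`0 ≤ T 1_{s ∩ A} ≤ T 1_A = 1_A` and `0 ≤ T 1_{s \ A} ≤ 1_Aᶜ`, which gives
`∫_A T 1_s = μ (s ∩ A)`, and by density `∫_A T f = ∫_A f`: `T f` is a version of `E[f | G]`.
The converse consists of the standard properties of the conditional expectation.
-/

open MeasureTheory Filter
open scoped ENNReal NNReal

namespace MeasureTheory

open Set Function
open scoped Topology

variable {Ω : Type*} {mΩ : MeasurableSpace Ω} {μ : Measure Ω}

lemma L1.tendsto_of_dominated_convergence {E : Type*} [NormedAddCommGroup E] {F : ℕ → Lp E 1 μ}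
    {f : Lp E 1 μ} {bound : Ω → ℝ} (hbound : Integrable bound μ)
    (hF : ∀ n, ∀ᵐ ω ∂μ, ‖F n ω‖ ≤ bound ω)
    (hlim : ∀ᵐ ω ∂μ, Tendsto (fun n ↦ F n ω) atTop (𝓝 (f ω))) :
    Tendsto F atTop (𝓝 f) := by
  rw [Lp.tendsto_Lp_iff_tendsto_eLpNorm']
  simp_rw [eLpNorm_one_eq_lintegral_enorm, Pi.sub_apply, ← ofReal_norm]
  exact tendsto_lintegral_norm_of_dominated_convergence
    (fun n ↦ Lp.aestronglyMeasurable (F n)) hbound.2 hF hlim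

lemma L1.norm_eq_integral_of_nonneg {f : Lp ℝ 1 μ} (hf : 0 ≤ f) : ‖f‖ = ∫ ω, f ω ∂μ := by
  rw [L1.norm_eq_integral_norm]
  refine integral_congr_ae ?_
  filter_upwards [(Lp.coeFn_nonneg f).2 hf] with ω hω using Real.norm_of_nonneg hω

lemma L1.eq_of_le_of_integral_le {f g : Lp ℝ 1 μ} (hfg : f ≤ g)
    (h : ∫ ω, g ω ∂μ ≤ ∫ ω, f ω ∂μ) : f = g := by
  have hfg' := (Lp.coeFn_le f g).2 hfg
  exact Lp.ext <| (integral_eq_iff_of_ae_le (L1.integrable_coeFn f) (L1.integrable_coeFn g)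
    hfg').1 (le_antisymm (integral_mono_ae (L1.integrable_coeFn f) (L1.integrable_coeFn g) hfg') h)

variable {p : ℝ≥0∞} {s : Set Ω} {hs : MeasurableSet s} {hμs : μ s ≠ ∞}

lemma smul_indicatorConstLp_one (c : ℝ) :
    c • indicatorConstLp p hs hμs (1 : ℝ) = indicatorConstLp p hs hμs c := by
  simp_rw [indicatorConstLp, ← MemLp.toLp_const_smul]
  congr 1
  ext ω
  by_cases h : ω ∈ s <;> simp [h]

lemma ContinuousLinearMap.ext_indicatorConstLp [Fact (1 ≤ p)] (hp : p ≠ ∞) {F : Type*}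
    [NormedAddCommGroup F] [NormedSpace ℝ F] {φ ψ : Lp ℝ p μ →L[ℝ] F}
    (h : ∀ s (hs : MeasurableSet s) (hμs : μ s ≠ ∞),
      φ (indicatorConstLp p hs hμs 1) = ψ (indicatorConstLp p hs hμs 1)) : φ = ψ := by
  ext f
  induction f using Lp.induction hp with
  | indicatorConst c hs hμs =>
    rw [Lp.simpleFunc.coe_indicatorConst, ← smul_indicatorConstLp_one, map_smul, map_smul, h]
  | add _ _ _ hf hg => rw [map_add, map_add, hf, hg]
  | isClosed => exact isClosed_eq φ.continuous ψ.continuous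

noncomputable def L1.setIntegralCLM (μ : Measure Ω) (A : Set Ω) : Lp ℝ 1 μ →L[ℝ] ℝ :=
  L1.integralCLM.comp (LpToLpRestrictCLM Ω ℝ ℝ μ 1 A)

lemma L1.setIntegralCLM_apply (A : Set Ω) (f : Lp ℝ 1 μ) :
    L1.setIntegralCLM μ A f = ∫ ω in A, f ω ∂μ := by
  rw [setIntegralCLM, ContinuousLinearMap.comp_apply, ← L1.integral_eq, L1.integral_eq_integral,
    integral_congr_ae (LpToLpRestrictCLM_coeFn ℝ A f)]

lemma indicatorConstLp_add_compl [IsFiniteMeasure μ] {E : Type*} [NormedAddCommGroup E] (c : E) :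
    indicatorConstLp p hs hμs c + indicatorConstLp p hs.compl (measure_ne_top μ _) c =
      Lp.const p μ c := by
  rw [← indicatorConstLp_disjoint_union hs hs.compl _ _ disjoint_compl_right,
    ← indicatorConstLp_univ]
  simp_rw [union_compl_self]

lemma indicatorConstLp_inter_add_diff {t : Set Ω} (ht : MeasurableSet t) {E : Type*}
    [NormedAddCommGroup E] (c : E) :
    indicatorConstLp p (hs.inter ht) (measure_ne_top_of_subset inter_subset_left hμs) c +
      indicatorConstLp p (hs.diff ht) (measure_ne_top_of_subset sdiff_subset hμs) c =
      indicatorConstLp p hs hμs c := by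
  rw [← indicatorConstLp_disjoint_union _ _ _ _ (disjoint_sdiff_inter.symm.mono_right le_rfl)]
  simp_rw [inter_union_sdiff]

lemma indicatorConstLp_nonneg {c : ℝ} (hc : 0 ≤ c) : 0 ≤ indicatorConstLp p hs hμs c := by
  rw [← Lp.coeFn_nonneg]
  filter_upwards [indicatorConstLp_coeFn (p := p) (hs := hs) (hμs := hμs) (c := c)] with ω h
  rw [h]
  exact indicator_nonneg (fun _ _ ↦ hc) ω

lemma indicatorConstLp_mono {t : Set Ω} {ht : MeasurableSet t} {hμt : μ t ≠ ∞} (hst : s ⊆ t)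
    {c : ℝ} (hc : 0 ≤ c) : indicatorConstLp p hs hμs c ≤ indicatorConstLp p ht hμt c := by
  rw [← Lp.coeFn_le]
  filter_upwards [indicatorConstLp_coeFn (p := p) (hs := hs) (hμs := hμs) (c := c),
    indicatorConstLp_coeFn (p := p) (hs := ht) (hμs := hμt) (c := c)] with ω hs' ht'
  rw [hs', ht']
  exact indicator_le_indicator_of_subset hst (fun _ ↦ hc) ω

lemma indicatorConstLp_union_eq_sup {t : Set Ω} {ht : MeasurableSet t} {hμt : μ t ≠ ∞} {c : ℝ}
    (hc : 0 ≤ c) : indicatorConstLp p (hs.union ht) (measure_union_ne_top hμs hμt) c =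
      indicatorConstLp p hs hμs c ⊔ indicatorConstLp p ht hμt c := by
  refine Lp.ext ?_
  filter_upwards [indicatorConstLp_coeFn (p := p) (hs := hs.union ht) (c := c)
      (hμs := measure_union_ne_top hμs hμt),
    indicatorConstLp_coeFn (p := p) (hs := hs) (hμs := hμs) (c := c),
    indicatorConstLp_coeFn (p := p) (hs := ht) (hμs := hμt) (c := c),
    Lp.coeFn_sup (indicatorConstLp p hs hμs c) (indicatorConstLp p ht hμt c)] with ω h h₁ h₂ h₃
  rw [h, h₃, Pi.sup_apply, h₁, h₂]
  by_cases hωs : ω ∈ s <;> by_cases hωt : ω ∈ t <;> simp [hωs, hωt, hc]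

lemma setIntegral_eq_zero_of_le_indicatorConstLp {v : Lp ℝ p μ} (hv₀ : 0 ≤ v) {c : ℝ}
    (hv : v ≤ indicatorConstLp p hs hμs c) {A : Set Ω} (hA : Disjoint A s) :
    ∫ ω in A, v ω ∂μ = 0 := by
  refine setIntegral_eq_zero_of_ae_eq_zero ?_
  filter_upwards [(Lp.coeFn_nonneg v).2 hv₀, (Lp.coeFn_le _ _).2 hv,
    indicatorConstLp_coeFn_notMem (p := p) (hs := hs) (hμs := hμs) (c := c)] with ω h₀ h h' hω
  exact le_antisymm (h.trans_eq (h' (hA.notMem_of_mem_left hω))) h₀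

lemma L1.tendsto_indicatorConstLp_iUnion [IsFiniteMeasure μ] {s : ℕ → Set Ω}
    (hs : ∀ n, MeasurableSet (s n)) (hmono : Monotone s) :
    Tendsto (fun n ↦ indicatorConstLp 1 (hs n) (measure_ne_top μ _) (1 : ℝ)) atTop
      (𝓝 (indicatorConstLp 1 (MeasurableSet.iUnion hs) (measure_ne_top μ _) 1)) := by
  refine L1.tendsto_of_dominated_convergence (integrable_const 1)
    (fun n ↦ (indicatorConstLp_coeFn (p := 1) (hs := hs n) (hμs := measure_ne_top μ _)
      (c := (1 : ℝ))).mono fun ω h ↦ ?_) ?_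
  · rw [h]
    exact (norm_indicator_le_norm_self _ ω).trans_eq norm_one
  · filter_upwards [indicatorConstLp_coeFn (p := 1) (hs := MeasurableSet.iUnion hs)
        (hμs := measure_ne_top μ _) (c := (1 : ℝ)),
      ae_all_iff.2 fun n ↦ indicatorConstLp_coeFn (p := 1) (hs := hs n)
        (hμs := measure_ne_top μ _) (c := (1 : ℝ))] with ω h h'
    simp_rw [h, h', tendsto_indicator_const_apply_iff_eventually]
    by_cases hω : ω ∈ ⋃ n, s n
    · obtain ⟨n, hn⟩ := mem_iUnion.1 hω
      filter_upwards [eventually_ge_atTop n] with m hm using iff_of_true (hmono hm hn) hω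
    · exact Eventually.of_forall fun m ↦ iff_of_false (fun h ↦ hω (mem_iUnion_of_mem m h)) hω

lemma tendsto_min_max_natCast_mul (x : ℝ) :
    Tendsto (fun n : ℕ ↦ min (max (n * x) 0) 1) atTop (𝓝 (if 0 < x then 1 else 0)) := by
  split_ifs with hx
  · refine tendsto_const_nhds.congr' ?_
    filter_upwards [(tendsto_natCast_atTop_atTop.atTop_mul_const hx).eventually_ge_atTop 1]
      with n hn
    rw [max_eq_left (by linarith), min_eq_right hn]
  · refine tendsto_const_nhds.congr fun n ↦ ?_
    rw [max_eq_right (mul_nonpos_of_nonneg_of_nonpos n.cast_nonneg (not_lt.1 hx)),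
      min_eq_left zero_le_one]

lemma setIntegral_map_eq_of_forall_indicatorConstLp (S : Lp ℝ 1 μ →L[ℝ] Lp ℝ 1 μ) (A : Set Ω)
    (h : ∀ s (hs : MeasurableSet s) (hμs : μ s ≠ ∞),
      ∫ ω in A, S (indicatorConstLp 1 hs hμs 1) ω ∂μ =
        ∫ ω in A, indicatorConstLp 1 hs hμs (1 : ℝ) ω ∂μ)
    (f : Lp ℝ 1 μ) : ∫ ω in A, S f ω ∂μ = ∫ ω in A, f ω ∂μ := by
  have := ContinuousLinearMap.ext_indicatorConstLp ENNReal.one_ne_top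
    (φ := (L1.setIntegralCLM μ A).comp S) (ψ := L1.setIntegralCLM μ A)
    (by simpa [L1.setIntegralCLM_apply] using h)
  simpa [L1.setIntegralCLM_apply] using congr($this f)

section Markov

variable [IsFiniteMeasure μ]

structure IsMarkovContraction (T : Lp ℝ 1 μ →ₗ[ℝ] Lp ℝ 1 μ) : Prop where
  nonneg : ∀ f, 0 ≤ f → 0 ≤ T f
  map_const_one : T (Lp.const 1 μ 1) = Lp.const 1 μ 1
  norm_map_le : ∀ f, ‖T f‖ ≤ ‖f‖

def FixesIndicator (T : Lp ℝ 1 μ →ₗ[ℝ] Lp ℝ 1 μ) (A : Set Ω) : Prop :=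
  ∃ hA : MeasurableSet A, IsFixedPt T (indicatorConstLp 1 hA (measure_ne_top μ A) 1)

namespace IsMarkovContraction

variable {T : Lp ℝ 1 μ →ₗ[ℝ] Lp ℝ 1 μ}

lemma monotone (hT : IsMarkovContraction T) : Monotone T := fun f g hfg ↦ by
  simpa using hT.nonneg (g - f) (sub_nonneg.2 hfg)

lemma continuous (hT : IsMarkovContraction T) : Continuous T :=
  (AddMonoidHomClass.lipschitz_of_bound T 1 fun f ↦ by simpa using hT.norm_map_le f).continuous

lemma integral_map_le_of_nonneg (hT : IsMarkovContraction T) {f : Lp ℝ 1 μ} (hf : 0 ≤ f) :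
    ∫ ω, T f ω ∂μ ≤ ∫ ω, f ω ∂μ := by
  rw [← L1.norm_eq_integral_of_nonneg hf, ← L1.norm_eq_integral_of_nonneg (hT.nonneg f hf)]
  exact hT.norm_map_le f

lemma integral_map_indicatorConstLp (hT : IsMarkovContraction T) {s : Set Ω}
    (hs : MeasurableSet s) (hμs : μ s ≠ ∞) :
    ∫ ω, T (indicatorConstLp 1 hs hμs 1) ω ∂μ = μ.real s := by
  have hle (t : Set Ω) (ht : MeasurableSet t) :
      ∫ ω, T (indicatorConstLp 1 ht (measure_ne_top μ t) 1) ω ∂μ ≤ μ.real t := by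
    simpa [integral_indicatorConstLp] using
      hT.integral_map_le_of_nonneg
        (indicatorConstLp_nonneg (p := 1) (hs := ht) (hμs := measure_ne_top μ t) zero_le_one)
  have hsum : ∫ ω, T (indicatorConstLp 1 hs hμs 1) ω ∂μ +
      ∫ ω, T (indicatorConstLp 1 hs.compl (measure_ne_top μ _) 1) ω ∂μ = μ.real s + μ.real sᶜ := by
    rw [measureReal_add_measureReal_compl hs, ← L1.integral_eq_integral, ← L1.integral_eq_integral,
      ← L1.integral_add, ← map_add, indicatorConstLp_add_compl, hT.map_const_one,
      L1.integral_eq_integral, integral_congr_ae (Lp.coeFn_const 1 μ (1 : ℝ))]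
    simp
  linarith [hle s hs, hle sᶜ hs.compl]

lemma integral_map (hT : IsMarkovContraction T) (f : Lp ℝ 1 μ) :
    ∫ ω, T f ω ∂μ = ∫ ω, f ω ∂μ := by
  simpa using setIntegral_map_eq_of_forall_indicatorConstLp ⟨T, hT.continuous⟩ univ
    (fun s hs hμs ↦ by
      simpa [integral_indicatorConstLp] using hT.integral_map_indicatorConstLp hs hμs) f

lemma isFixedPt_inf (hT : IsMarkovContraction T) {u v : Lp ℝ 1 μ} (hu : IsFixedPt T u)
    (hv : IsFixedPt T v) : IsFixedPt T (u ⊓ v) :=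
  L1.eq_of_le_of_integral_le
    (le_inf ((hT.monotone inf_le_left).trans_eq hu.eq) ((hT.monotone inf_le_right).trans_eq hv.eq))
    (hT.integral_map _).ge

lemma isFixedPt_sup (hT : IsMarkovContraction T) {u v : Lp ℝ 1 μ} (hu : IsFixedPt T u)
    (hv : IsFixedPt T v) : IsFixedPt T (u ⊔ v) := by
  have hneg {w : Lp ℝ 1 μ} (hw : IsFixedPt T w) : IsFixedPt T (-w) := by
    simp [IsFixedPt, hw.eq]
  simpa [neg_inf] using hneg (hT.isFixedPt_inf (hneg hu) (hneg hv))

lemma fixesIndicator_compl (hT : IsMarkovContraction T) {A : Set Ω} (hA : FixesIndicator T A) :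
    FixesIndicator T Aᶜ := by
  obtain ⟨hA, hfix⟩ := hA
  refine ⟨hA.compl, ?_⟩
  rw [IsFixedPt, ← add_sub_cancel_left (indicatorConstLp 1 hA (measure_ne_top μ A) (1 : ℝ))
    (indicatorConstLp 1 hA.compl _ 1), indicatorConstLp_add_compl, map_sub, hT.map_const_one,
    hfix.eq]

lemma fixesIndicator_union (hT : IsMarkovContraction T) {A B : Set Ω} (hA : FixesIndicator T A)
    (hB : FixesIndicator T B) : FixesIndicator T (A ∪ B) := by
  obtain ⟨hA, hfixA⟩ := hA
  obtain ⟨hB, hfixB⟩ := hB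
  refine ⟨hA.union hB, ?_⟩
  rw [indicatorConstLp_union_eq_sup (hs := hA) (ht := hB) (hμs := measure_ne_top μ A)
    (hμt := measure_ne_top μ B) zero_le_one]
  exact hT.isFixedPt_sup hfixA hfixB

lemma fixesIndicator_iUnion (hT : IsMarkovContraction T) {A : ℕ → Set Ω}
    (hA : ∀ n, FixesIndicator T (A n)) : FixesIndicator T (⋃ n, A n) := by
  have hacc (n : ℕ) : FixesIndicator T (accumulate A n) := by
    induction n with
    | zero => simpa [accumulate_zero_nat] using hA 0
    | succ n ih => simpa [accumulate_succ] using hT.fixesIndicator_union ih (hA (n + 1))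
  rw [← iUnion_accumulate]
  exact ⟨_, (isClosed_fixedPoints hT.continuous).mem_of_tendsto
    (L1.tendsto_indicatorConstLp_iUnion (fun n ↦ (hacc n).1) monotone_accumulate)
    (Eventually.of_forall fun n ↦ (hacc n).2)⟩

lemma fixesIndicator_preimage_Ioi (hT : IsMarkovContraction T) {u : Lp ℝ 1 μ}
    (hu : IsFixedPt T u) (c : ℝ) : FixesIndicator T (u ⁻¹' Ioi c) := by
  set one := Lp.const 1 μ (1 : ℝ)
  set g : ℕ → Lp ℝ 1 μ := fun n ↦ (((n : ℝ) • (u - c • one)) ⊔ 0) ⊓ one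
  have hfix (n : ℕ) : IsFixedPt T (g n) :=
    hT.isFixedPt_inf (hT.isFixedPt_sup (by simp [IsFixedPt, hu.eq, hT.map_const_one, one])
      (map_zero T)) hT.map_const_one
  have hg (n : ℕ) : g n =ᵐ[μ] fun ω ↦ min (max (n * (u ω - c)) 0) 1 := by
    filter_upwards [Lp.coeFn_inf (((n : ℝ) • (u - c • one)) ⊔ 0) one,
      Lp.coeFn_sup ((n : ℝ) • (u - c • one)) 0, Lp.coeFn_smul (n : ℝ) (u - c • one),
      Lp.coeFn_sub u (c • one), Lp.coeFn_smul c one, Lp.coeFn_const 1 μ (1 : ℝ),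
      Lp.coeFn_zero ℝ 1 μ] with ω h₁ h₂ h₃ h₄ h₅ h₆ h₇
    simp only [g, h₁, Pi.inf_apply, h₂, Pi.sup_apply, h₃, Pi.smul_apply, h₄, Pi.sub_apply, h₅,
      h₆, h₇, one, Function.const_apply, Pi.zero_apply, smul_eq_mul, mul_one]
  have hA : MeasurableSet (u ⁻¹' Ioi c) := (Lp.stronglyMeasurable u).measurable measurableSet_Ioi
  have hlim : Tendsto g atTop (𝓝 (indicatorConstLp 1 hA (measure_ne_top μ _) 1)) := by
    refine L1.tendsto_of_dominated_convergence (integrable_const (1 : ℝ))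
      (fun n ↦ (hg n).mono fun ω h ↦ ?_) ?_
    · rw [h, Real.norm_eq_abs, abs_le]
      exact ⟨by linarith [le_min (le_max_right (n * (u ω - c)) 0) zero_le_one], min_le_right _ _⟩
    · filter_upwards [ae_all_iff.2 hg, indicatorConstLp_coeFn (p := 1) (hs := hA)
        (hμs := measure_ne_top μ _) (c := (1 : ℝ))] with ω h h'
      classical
      rw [tendsto_congr h, h', indicator_apply]
      simpa only [mem_preimage, mem_Ioi, sub_pos] using tendsto_min_max_natCast_mul (u ω - c)
  exact ⟨hA, (isClosed_fixedPoints hT.continuous).mem_of_tendsto hlim (Eventually.of_forall hfix)⟩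

@[reducible]
def invariants (hT : IsMarkovContraction T) : MeasurableSpace Ω where
  MeasurableSet' := FixesIndicator T
  measurableSet_empty := ⟨.empty, by simp [IsFixedPt]⟩
  measurableSet_compl _ := hT.fixesIndicator_compl
  measurableSet_iUnion _ := hT.fixesIndicator_iUnion

lemma invariants_le (hT : IsMarkovContraction T) : hT.invariants ≤ mΩ := fun _ hA ↦ hA.1

lemma measurable_invariants (hT : IsMarkovContraction T) {u : Lp ℝ 1 μ} (hu : IsFixedPt T u) :
    Measurable[hT.invariants] u :=
  measurable_of_Ioi fun c ↦ hT.fixesIndicator_preimage_Ioi hu c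

lemma setIntegral_map_indicatorConstLp (hT : IsMarkovContraction T) {A : Set Ω}
    (hA : FixesIndicator T A) {s : Set Ω} (hs : MeasurableSet s) (hμs : μ s ≠ ∞) :
    ∫ ω in A, T (indicatorConstLp 1 hs hμs 1) ω ∂μ =
      ∫ ω in A, indicatorConstLp 1 hs hμs (1 : ℝ) ω ∂μ := by
  obtain ⟨_, hfixAc⟩ := hT.fixesIndicator_compl hA
  obtain ⟨hA, hfixA⟩ := hA
  set v := T (indicatorConstLp 1 (hs.inter hA) (measure_ne_top μ _) 1)
  set w := T (indicatorConstLp 1 (hs.diff hA) (measure_ne_top μ _) 1)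
  have hv : ∫ ω in Aᶜ, v ω ∂μ = 0 :=
    setIntegral_eq_zero_of_le_indicatorConstLp (hT.nonneg _ (indicatorConstLp_nonneg zero_le_one))
      ((hT.monotone (indicatorConstLp_mono inter_subset_right zero_le_one)).trans_eq hfixA.eq)
      disjoint_compl_left
  have hw : ∫ ω in A, w ω ∂μ = 0 :=
    setIntegral_eq_zero_of_le_indicatorConstLp (hT.nonneg _ (indicatorConstLp_nonneg zero_le_one))
      ((hT.monotone (indicatorConstLp_mono (fun _ h ↦ h.2) zero_le_one)).trans_eq hfixAc.eq)
      disjoint_compl_right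
  calc ∫ ω in A, T (indicatorConstLp 1 hs hμs 1) ω ∂μ = ∫ ω in A, v ω ∂μ + ∫ ω in A, w ω ∂μ := by
        simp only [← L1.setIntegralCLM_apply, v, w, ← map_add]
        rw [indicatorConstLp_inter_add_diff hA]
    _ = ∫ ω, v ω ∂μ := by
        rw [hw, add_zero, ← integral_add_compl hA (L1.integrable_coeFn v), hv, add_zero]
    _ = ∫ ω in A, indicatorConstLp 1 hs hμs (1 : ℝ) ω ∂μ := by
        rw [hT.integral_map_indicatorConstLp, setIntegral_indicatorConstLp hA, smul_eq_mul, mul_one]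

lemma setIntegral_map (hT : IsMarkovContraction T) {A : Set Ω}
    (hA : MeasurableSet[hT.invariants] A) (f : Lp ℝ 1 μ) :
    ∫ ω in A, T f ω ∂μ = ∫ ω in A, f ω ∂μ :=
  setIntegral_map_eq_of_forall_indicatorConstLp ⟨T, hT.continuous⟩ A
    (fun _ hs hμs ↦ hT.setIntegral_map_indicatorConstLp hA hs hμs) f

theorem exists_ae_eq_condExp (hT : IsMarkovContraction T) (hproj : ∀ f, T (T f) = T f) :
    ∃ G : MeasurableSpace Ω, G ≤ mΩ ∧ ∀ f : Lp ℝ 1 μ, T f =ᵐ[μ] μ[f|G] := by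
  refine ⟨hT.invariants, hT.invariants_le, fun f ↦ ?_⟩
  have : IsFiniteMeasure (μ.trim hT.invariants_le) := isFiniteMeasure_trim _
  exact ae_eq_condExp_of_forall_setIntegral_eq hT.invariants_le (L1.integrable_coeFn f)
    (fun _ _ _ ↦ (L1.integrable_coeFn (T f)).integrableOn) (fun _ hs _ ↦ hT.setIntegral_map hs f)
    (hT.measurable_invariants (hproj f)).aestronglyMeasurable

end IsMarkovContraction

theorem isMarkovContraction_of_ae_eq_condExp {T : Lp ℝ 1 μ →ₗ[ℝ] Lp ℝ 1 μ}
    {G : MeasurableSpace Ω} (hG : G ≤ mΩ) (hT : ∀ f : Lp ℝ 1 μ, T f =ᵐ[μ] μ[f|G]) :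
    IsMarkovContraction T ∧ ∀ f, T (T f) = T f := by
  have : IsFiniteMeasure (μ.trim hG) := isFiniteMeasure_trim hG
  refine ⟨⟨fun f hf ↦ ?_, ?_, fun f ↦ ?_⟩, fun f ↦ ?_⟩
  · rw [← Lp.coeFn_nonneg] at hf ⊢
    filter_upwards [hT f, condExp_nonneg hf] with ω h₁ h₂
    rw [h₁]
    exact h₂
  · refine Lp.ext ?_
    filter_upwards [hT _, condExp_congr_ae (m := G) (Lp.coeFn_const 1 μ (1 : ℝ)),
      Lp.coeFn_const 1 μ (1 : ℝ)] with ω h₁ h₂ h₃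
    rw [h₁, h₂, h₃]
    exact congrFun (condExp_const hG (1 : ℝ)) ω
  · refine ENNReal.toReal_mono (Lp.eLpNorm_ne_top f) ?_
    rw [eLpNorm_congr_ae (hT f)]
    exact eLpNorm_condExp_le_eLpNorm _ le_rfl
  · exact Lp.ext ((hT (T f)).trans ((condExp_congr_ae (hT f)).trans
      ((condExp_condExp_of_le le_rfl hG).trans (hT f).symm)))

end Markov

end MeasureTheory

/-- Douglas' theorem: a linear operator on `L¹` of a probability space is a contractive Markov
projection iff it is an ordinary conditional expectation operator. -/
theorem douglas_characterization_of_condExp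
    {Ω : Type*} [mΩ : MeasurableSpace Ω] (μ : Measure Ω) [IsProbabilityMeasure μ]
    (T : Lp ℝ 1 μ →ₗ[ℝ] Lp ℝ 1 μ) :
    ((∀ f, T (T f) = T f) ∧ (∀ f, 0 ≤ f → 0 ≤ T f) ∧
      T ((memLp_const (1 : ℝ)).toLp fun _ => (1 : ℝ)) =
        ((memLp_const (1 : ℝ)).toLp fun _ => (1 : ℝ)) ∧
      (∀ f, ‖T f‖ ≤ ‖f‖)) ↔
    ∃ G : MeasurableSpace Ω, G ≤ mΩ ∧ ∀ f : Lp ℝ 1 μ, ⇑(T f) =ᵐ[μ] μ[(f : Ω → ℝ)|G] := by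
  constructor
  · rintro ⟨hproj, hpos, hone, hnorm⟩
    exact IsMarkovContraction.exists_ae_eq_condExp ⟨hpos, hone, hnorm⟩ hproj
  · rintro ⟨G, hG, hT⟩
    obtain ⟨⟨hpos, hone, hnorm⟩, hproj⟩ := isMarkovContraction_of_ae_eq_condExp hG hT
    exact ⟨hproj, hpos, hone, hnorm⟩
end
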